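/- Let ν > 0 and h > 0. If Y ∼ χ²_ν (central chi-square with ν degrees of freedom) and, conditionally on Y = y, X ∼ χ²_ν(yh) (noncentral chi-square with noncentrality yh), then X/(1+h) ∼ χ²_ν, i.e., X is distributed as (1+h) times a central chi-square with ν degrees of freedom. -/

import Mathlib

open MeasureTheory ProbabilityTheory

/-- A measure on `ℝ` is the noncentral chi-square distribution with `ν` degrees of freedom
and noncentrality `δ` if it is a probability measure whose moment generating function is
`(1 - 2t)^{-ν/2} exp(δ t / (1 - 2t))` for `t < 1/2`. The central chi-square corresponds
to `δ = 0`. -/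
def IsNoncentralChiSq (μ : Measure ℝ) (ν δ : ℝ) : Prop :=
  IsProbabilityMeasure μ ∧ ∀ t : ℝ, t < 1 / 2 →
    ∫ x, Real.exp (t * x) ∂μ
      = (1 - 2 * t) ^ (-ν / 2) * Real.exp (δ * t / (1 - 2 * t))

/-!
Conditioning on `Y`, `E[exp (u X)] = (1 - 2u)^{-ν/2} E[exp (s Y)]` with `s = h u / (1 - 2u)`;
for `u = t / (1 + h)` one has `(1 - 2u)(1 - 2s) = 1 - 2t`, so `X / (1 + h)` has MGF
`(1 - 2t)^{-ν/2}`. The conditional law is only prescribed for `y ≥ 0`, which suffices because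
`Y ≥ 0` almost surely: by the Chernoff bound, an MGF that stays bounded as `t → -∞` puts no
mass below `0`.
-/

open Real Filter Topology

theorem ae_nonneg_of_mgf_le {μ : Measure ℝ} [IsFiniteMeasure μ] {C : ℝ}
    (hint : ∀ t < 0, Integrable (fun x => exp (t * x)) μ) (hC : ∀ t < 0, mgf id μ t ≤ C) :
    ∀ᵐ x ∂μ, 0 ≤ x := by
  have hIic : ∀ ε > 0, μ {x | x ≤ -ε} = 0 := by
    intro ε hε
    have hchernoff : ∀ t < 0, μ.real {x | x ≤ -ε} ≤ exp (t * ε) * C := fun t ht =>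
      calc μ.real {x | x ≤ -ε} ≤ exp (-t * -ε) * mgf id μ t :=
            measure_le_le_exp_mul_mgf (X := id) (-ε) ht.le (hint t ht)
        _ ≤ exp (t * ε) * C := by
            rw [neg_mul_neg]; exact mul_le_mul_of_nonneg_left (hC t ht) (exp_pos _).le
    have hlim : Tendsto (fun t => exp (t * ε) * C) atBot (𝓝 0) := by
      simpa using (tendsto_exp_atBot.comp (tendsto_id.atBot_mul_const hε)).mul_const C
    have hle : μ.real {x | x ≤ -ε} ≤ 0 :=
      ge_of_tendsto hlim ((eventually_lt_atBot 0).mono hchernoff)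
    exact (measureReal_eq_zero_iff).mp (le_antisymm hle measureReal_nonneg)
  have hneg : {x : ℝ | ¬ 0 ≤ x} ⊆ ⋃ n : ℕ, {x | x ≤ -(1 / (n + 1))} := by
    intro x hx
    obtain ⟨n, hn⟩ := exists_nat_one_div_lt (neg_pos.mpr (not_le.mp hx))
    exact Set.mem_iUnion.mpr ⟨n, show x ≤ -(1 / (n + 1)) by linarith⟩
  exact ae_iff.mpr (measure_mono_null hneg (measure_iUnion_null fun n => hIic _ (by positivity)))

theorem integral_bind_of_nonneg {α β : Type*} [MeasurableSpace α] [MeasurableSpace β]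
    {μ : Measure α} {κ : Kernel α β} {f : β → ℝ} (hf : Measurable f) (hf₀ : 0 ≤ f)
    (hint : ∀ᵐ a ∂μ, Integrable f (κ a)) :
    ∫ x, f x ∂(μ.bind κ) = ∫ a, ∫ x, f x ∂κ a ∂μ := by
  have hinner : ∀ᵐ a ∂μ,
      ENNReal.ofReal (∫ x, f x ∂κ a) = ∫⁻ x, ENNReal.ofReal (f x) ∂κ a := by
    filter_upwards [hint] with a ha
    exact ofReal_integral_eq_lintegral_ofReal ha (.of_forall hf₀)
  rw [integral_eq_lintegral_of_nonneg_ae (.of_forall hf₀) hf.aestronglyMeasurable,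
    integral_eq_lintegral_of_nonneg_ae (.of_forall fun a => integral_nonneg hf₀)
      hf.stronglyMeasurable.integral_kernel.aestronglyMeasurable,
    Measure.lintegral_bind κ.measurable.aemeasurable hf.ennreal_ofReal.aemeasurable,
    lintegral_congr_ae hinner]

namespace IsNoncentralChiSq

variable {μ : Measure ℝ} {ν δ t : ℝ}

theorem integrable_exp_mul (hμ : IsNoncentralChiSq μ ν δ) (ht : t < 1 / 2) :
    Integrable (fun x => exp (t * x)) μ := by
  by_contra hint
  have hpos : 0 < (1 - 2 * t) ^ (-ν / 2) * exp (δ * t / (1 - 2 * t)) := by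
    have : 0 < 1 - 2 * t := by linarith
    positivity
  rw [← hμ.2 t ht, integral_undef hint] at hpos
  exact hpos.false

theorem mgf_le_one (hμ : IsNoncentralChiSq μ ν δ) (hν : 0 ≤ ν) (hδ : 0 ≤ δ) (ht : t < 0) :
    mgf id μ t ≤ 1 := by
  have hpow : (1 - 2 * t) ^ (-ν / 2) ≤ 1 :=
    rpow_le_one_of_one_le_of_nonpos (by linarith) (by linarith)
  have hexp : exp (δ * t / (1 - 2 * t)) ≤ 1 :=
    exp_le_one_iff.mpr (div_nonpos_of_nonpos_of_nonneg (mul_nonpos_of_nonneg_of_nonpos hδ ht.le)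
      (by linarith))
  calc mgf id μ t = (1 - 2 * t) ^ (-ν / 2) * exp (δ * t / (1 - 2 * t)) := hμ.2 t (by linarith)
    _ ≤ 1 := mul_le_one₀ hpow (exp_pos _).le hexp

theorem ae_nonneg (hμ : IsNoncentralChiSq μ ν δ) (hν : 0 ≤ ν) (hδ : 0 ≤ δ) :
    ∀ᵐ x ∂μ, 0 ≤ x :=
  have := hμ.1
  ae_nonneg_of_mgf_le (fun _ ht => hμ.integrable_exp_mul (by linarith))
    fun _ ht => hμ.mgf_le_one hν hδ ht

end IsNoncentralChiSq

theorem integral_exp_mul_bind_of_isNoncentralChiSq {μ : Measure ℝ} {κ : Kernel ℝ ℝ} {ν h u : ℝ}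
    (hκ : ∀ᵐ y ∂μ, IsNoncentralChiSq (κ y) ν (y * h)) (hu : u < 1 / 2) :
    ∫ x, exp (u * x) ∂(μ.bind κ)
      = (1 - 2 * u) ^ (-ν / 2) * ∫ y, exp (h * u / (1 - 2 * u) * y) ∂μ := by
  rw [integral_bind_of_nonneg (by fun_prop) (fun _ => (exp_pos _).le)
    (hκ.mono fun _ hy => hy.integrable_exp_mul hu), ← integral_const_mul]
  refine integral_congr_ae (hκ.mono fun y hy => ?_)
  dsimp only
  rw [hy.2 u hu]
  ring_nf

theorem central_chi_sq_mixture (ν h : ℝ) (hν : 0 < ν) (hh : 0 < h)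
    (μY : Measure ℝ) (κ : Kernel ℝ ℝ)
    (hY : IsNoncentralChiSq μY ν 0)
    (hκ : ∀ y : ℝ, 0 ≤ y → IsNoncentralChiSq (κ y) ν (y * h)) :
    IsNoncentralChiSq ((μY.bind κ).map (fun x => x / (1 + h))) ν 0 := by
  have := hY.1
  have hκ_ae : ∀ᵐ y ∂μY, IsNoncentralChiSq (κ y) ν (y * h) :=
    (hY.ae_nonneg hν.le le_rfl).mono hκ
  have : IsProbabilityMeasure (μY.bind κ) :=
    isProbabilityMeasure_bind κ.measurable.aemeasurable (hκ_ae.mono fun _ hy => hy.1)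
  refine ⟨Measure.isProbabilityMeasure_map (by fun_prop), fun t ht => ?_⟩
  have h1h : 0 < 1 + h := by linarith
  set u := t / (1 + h) with hu_def
  have hut : u * (1 + h) = t := div_mul_cancel₀ t h1h.ne'
  have hu : u < 1 / 2 := by rw [div_lt_iff₀ h1h]; linarith
  have h12u : 0 < 1 - 2 * u := by linarith
  set s := h * u / (1 - 2 * u)
  have hsu : (1 - 2 * u) * (1 - 2 * s) = 1 - 2 * t := by
    have hs_mul : (1 - 2 * u) * s = h * u := mul_div_cancel₀ _ h12u.ne'
    linear_combination -2 * hs_mul - 2 * hut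
  have hs : s < 1 / 2 := by
    have : 0 < 1 - 2 * s := pos_of_mul_pos_right (hsu ▸ by linarith) h12u.le
    linarith
  calc ∫ x, exp (t * x) ∂(μY.bind κ).map (fun x => x / (1 + h))
      = ∫ x, exp (u * x) ∂(μY.bind κ) := by
        rw [integral_map (by fun_prop) (by fun_prop)]
        simp only [hu_def, mul_div, div_mul_eq_mul_div]
    _ = (1 - 2 * u) ^ (-ν / 2) * (1 - 2 * s) ^ (-ν / 2) := by
        rw [integral_exp_mul_bind_of_isNoncentralChiSq hκ_ae hu, hY.2 s hs]
        simp
    _ = (1 - 2 * t) ^ (-ν / 2) * exp (0 * t / (1 - 2 * t)) := by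
        rw [← mul_rpow h12u.le (by linarith), hsu]
        simp
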